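/- arXiv:1010.0852 — 3 statements merged into one kernel-verified Lean document; each statement's English description precedes it below -/
import Mathlib

section
/- In a finite cube-free median graph with n vertices, the number of 4-cycles (i.e., 4-element vertex subsets inducing a cycle of length 4) is at most n. -/
set_option maxHeartbeats 1000000


open SimpleGraph Finset

/-- The graph interval `I(u,v)`: vertices on shortest `(u,v)`-paths. -/
def interval {V : Type*} (G : SimpleGraph V) (u v : V) : Set V :=
  {w | G.dist u w + G.dist w v = G.dist u v}

/-- A median graph: connected, and every triple of vertices has a unique median. -/
def IsMedianGraph {V : Type*} (G : SimpleGraph V) : Prop :=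
  G.Connected ∧ ∀ x y z : V, ∃! m : V,
    m ∈ interval G x y ∧ m ∈ interval G y z ∧ m ∈ interval G x z

/-- A set of vertices is (graph) convex if it contains all intervals between its members. -/
def GraphConvex {V : Type*} (G : SimpleGraph V) (S : Set V) : Prop :=
  ∀ u ∈ S, ∀ v ∈ S, interval G u v ⊆ S

/-- A halfspace: a convex set with convex complement. -/
def IsHalfspace {V : Type*} (G : SimpleGraph V) (H : Set V) : Prop :=
  GraphConvex G H ∧ GraphConvex G Hᶜ

/-- The hypercube graph `Q_k`: vertices are `{0,1}^k`, adjacent iff they differ in exactly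
one coordinate. -/
def cubeGraph (k : ℕ) : SimpleGraph (Fin k → Fin 2) :=
  SimpleGraph.fromRel (fun a b => ∃! i, a i ≠ b i)

/-- A graph is cube-free if it has no induced subgraph isomorphic to `Q_3`. -/
def CubeFree {V : Type*} (G : SimpleGraph V) : Prop :=
  ¬ Nonempty (cubeGraph 3 ↪g G)

/-- A 4-cycle of the subgraph of `G` induced by `S`: a 4-element vertex subset of `S`
inducing a cycle of length 4. -/
def IsFourCycleIn {V : Type*} (G : SimpleGraph V) (S : Set V) (t : Finset V) : Prop :=
  (↑t : Set V) ⊆ S ∧ t.card = 4 ∧ Nonempty (G.induce (↑t : Set V) ≃g SimpleGraph.cycleGraph 4)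

section Aux
variable {V : Type*} {G : SimpleGraph V}

lemma mem_interval {u v w : V} :
    w ∈ interval G u v ↔ G.dist u w + G.dist w v = G.dist u v := Iff.rfl

lemma dist_comm' (G : SimpleGraph V) (a b : V) : G.dist a b = G.dist b a :=
  SimpleGraph.dist_comm

lemma adj_dist_one {a b : V} (h : G.Adj a b) : G.dist a b = 1 :=
  SimpleGraph.dist_eq_one_iff_adj.mpr h

lemma eq_of_dist_zero (hc : G.Connected) {a b : V} (h : G.dist a b = 0) : a = b :=
  (hc.dist_eq_zero_iff).mp h

/-- adjacent vertices are at different distances from any basepoint -/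
lemma adj_dist_ne (hG : IsMedianGraph G) (z : V) {u v : V} (h : G.Adj u v) :
    G.dist z u ≠ G.dist z v := by
  intro he
  have hc := hG.1
  obtain ⟨m, ⟨e1, e2, e3⟩, -⟩ := hG.2 u v z
  rw [mem_interval] at e1 e2 e3
  have h1 : G.dist u v = 1 := adj_dist_one h
  rw [h1] at e1
  rcases Nat.le_one_iff_eq_zero_or_eq_one.mp (le_of_add_le_left e1.le) with h0 | h0
  · have : u = m := eq_of_dist_zero hc h0
    subst this
    rw [dist_comm' G v u, h1] at e2
    rw [dist_comm' G z u, dist_comm' G z v, ← e2] at he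
    omega
  · have h0' : G.dist m v = 0 := by omega
    have : m = v := eq_of_dist_zero hc h0'
    subst this
    rw [h1] at e3
    rw [dist_comm' G z u, ← e3, dist_comm' G z m] at he
    omega

lemma adj_dist (hG : IsMedianGraph G) (z : V) {u v : V} (h : G.Adj u v) :
    G.dist z v = G.dist z u + 1 ∨ G.dist z u = G.dist z v + 1 := by
  have h1 : G.dist u v = 1 := adj_dist_one h
  have t1 : G.dist z v ≤ G.dist z u + 1 := by
    have := hG.1.dist_triangle (u := z) (v := u) (w := v); omega
  have t2 : G.dist z u ≤ G.dist z v + 1 := by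
    have := hG.1.dist_triangle (u := z) (v := v) (w := u)
    rw [dist_comm' G v u] at this; omega
  have := adj_dist_ne hG z h
  omega

lemma not_adj_of_dist (hG : IsMedianGraph G) {a b : V} (z : V)
    (h1 : G.dist z a + 1 ≠ G.dist z b) (h2 : G.dist z b + 1 ≠ G.dist z a) :
    ¬ G.Adj a b := fun hAdj => by rcases adj_dist hG z hAdj with h | h <;> omega

lemma ne_of_dist {a b : V} (z : V) (h : G.dist z a ≠ G.dist z b) : a ≠ b :=
  fun he => h (by rw [he])

lemma dist_eq_two (hG : IsMedianGraph G) {p q s : V} (hne : p ≠ q)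
    (hnadj : ¬ G.Adj p q) (h1 : G.Adj s p) (h2 : G.Adj s q) : G.dist p q = 2 := by
  have t : G.dist p q ≤ 2 := by
    have := hG.1.dist_triangle (u := p) (v := s) (w := q)
    have e1 : G.dist p s = 1 := adj_dist_one h1.symm
    have e2 : G.dist s q = 1 := adj_dist_one h2
    omega
  have t0 : G.dist p q ≠ 0 := fun h => hne (eq_of_dist_zero hG.1 h)
  have t1 : G.dist p q ≠ 1 := fun h => hnadj (SimpleGraph.dist_eq_one_iff_adj.mp h)
  omega

/-- no K_{2,3}: two vertices adjacent to three pairwise-distance-2 vertices coincide -/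
lemma k23 (hG : IsMedianGraph G) {p q r x y : V}
    (hx1 : G.Adj x p) (hx2 : G.Adj x q) (hx3 : G.Adj x r)
    (hy1 : G.Adj y p) (hy2 : G.Adj y q) (hy3 : G.Adj y r)
    (dpq : G.dist p q = 2) (dqr : G.dist q r = 2) (dpr : G.dist p r = 2) : x = y := by
  obtain ⟨m, -, hu⟩ := hG.2 p q r
  have key : ∀ w : V, G.Adj w p → G.Adj w q → G.Adj w r → w = m := by
    intro w w1 w2 w3
    apply hu
    refine ⟨?_, ?_, ?_⟩ <;> rw [mem_interval]
    · rw [dist_comm' G p w, adj_dist_one w1, adj_dist_one w2, dpq]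
    · rw [dist_comm' G q w, adj_dist_one w2, adj_dist_one w3, dqr]
    · rw [dist_comm' G p w, adj_dist_one w1, adj_dist_one w3, dpr]
  rw [key x hx1 hx2 hx3, key y hy1 hy2 hy3]

/-- two distinct "downward" neighbors of v have a unique common lower neighbor -/
lemma unique_bot (hG : IsMedianGraph G) {z v p q : V} {k : ℕ}
    (hvp : G.Adj v p) (hvq : G.Adj v q) (hpq : p ≠ q)
    (hp : G.dist z p = k + 1) (hq : G.dist z q = k + 1) :
    ∃! m, G.Adj p m ∧ G.Adj q m ∧ G.dist z m = k := by
  have hc := hG.1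
  have hnadj : ¬ G.Adj p q := fun h => adj_dist_ne hG z h (by omega)
  have dpq : G.dist p q = 2 := dist_eq_two hG hpq hnadj hvp hvq
  obtain ⟨m, ⟨e1, e2, e3⟩, hu⟩ := hG.2 p q z
  rw [mem_interval] at e1 e2 e3
  rw [dpq] at e1
  rw [dist_comm' G q z, hq] at e2
  rw [dist_comm' G p z, hp] at e3
  have hmp : m ≠ p := by
    intro he
    rw [he, dist_comm' G q p, dpq, dist_comm' G p z, hp] at e2
    omega
  have hmq : G.dist m q ≠ 0 := by
    intro h0
    have : m = q := eq_of_dist_zero hc h0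
    subst this
    rw [dpq] at e3; omega
  have hpm : G.dist p m ≠ 0 := fun h0 => hmp (eq_of_dist_zero hc h0).symm
  have hpm1 : G.dist p m = 1 := by omega
  have hqm1 : G.dist m q = 1 := by omega
  have hmz : G.dist z m = k := by rw [dist_comm' G z m]; omega
  refine ⟨m, ⟨SimpleGraph.dist_eq_one_iff_adj.mp hpm1,
    (SimpleGraph.dist_eq_one_iff_adj.mp hqm1).symm, hmz⟩, ?_⟩
  rintro m' ⟨a1, a2, a3⟩
  apply hu
  have b1 := adj_dist_one a1
  have b2 := adj_dist_one a2
  have c1 := dist_comm' G m' q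
  have c2 := dist_comm' G m' z
  have c3 := dist_comm' G q z
  have c4 := dist_comm' G p z
  refine ⟨?_, ?_, ?_⟩
  · show G.dist p m' + G.dist m' q = G.dist p q
    omega
  · show G.dist q m' + G.dist m' z = G.dist q z
    omega
  · show G.dist p m' + G.dist m' z = G.dist p z
    omega

/-- structure of a 4-cycle relative to a basepoint, when `a` is the farthest corner -/
lemma square_top (hG : IsMedianGraph G) (z : V) {a b c d : V}
    (hab : G.Adj a b) (hbc : G.Adj b c) (hcd : G.Adj c d) (hda : G.Adj d a)
    (hac : ¬ G.Adj a c) (hbd : ¬ G.Adj b d) (hac' : a ≠ c) (hbd' : b ≠ d)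
    (hb : G.dist z b ≤ G.dist z a) (hcu : G.dist z c ≤ G.dist z a)
    (hd : G.dist z d ≤ G.dist z a) :
    ∃ k, G.dist z a = k + 2 ∧ G.dist z b = k + 1 ∧ G.dist z d = k + 1 ∧
      G.dist z c = k := by
  have e1 := adj_dist hG z hab
  have e2 := adj_dist hG z hbc
  have e3 := adj_dist hG z hcd
  have e4 := adj_dist hG z hda
  have hcase : G.dist z c = G.dist z a ∨
      (G.dist z a = G.dist z c + 2) := by omega
  rcases hcase with hca | hca
  · exfalso
    have dac : G.dist a c = 2 := dist_eq_two hG hac' hac hab.symm hbc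
    obtain ⟨m, -, hu⟩ := hG.2 a c z
    have key : ∀ w : V, G.Adj a w → G.Adj w c → G.dist z w + 1 = G.dist z a →
        w = m := by
      intro w w1 w2 w3
      apply hu
      have b1 := adj_dist_one w1
      have b2 := adj_dist_one w2
      have c1 := dist_comm' G w z
      have c2 := dist_comm' G c z
      have c3 := dist_comm' G a z
      refine ⟨?_, ?_, ?_⟩
      · show G.dist a w + G.dist w c = G.dist a c
        omega
      · show G.dist c w + G.dist w z = G.dist c z
        have := dist_comm' G c w
        omega
      · show G.dist a w + G.dist w z = G.dist a z
        omega
    have hbm := key b hab hbc (by omega)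
    have hdm := key d hda.symm hcd.symm (by omega)
    exact hbd' (hbm.trans hdm.symm)
  · exact ⟨G.dist z c, by omega, by omega, by omega, rfl⟩

lemma cube_embed {v p q r m1 m2 m3 w : V}
    (avp : G.Adj v p) (avq : G.Adj v q) (avr : G.Adj v r)
    (apm1 : G.Adj p m1) (aqm1 : G.Adj q m1) (aqm2 : G.Adj q m2) (arm2 : G.Adj r m2)
    (apm3 : G.Adj p m3) (arm3 : G.Adj r m3)
    (awm1 : G.Adj w m1) (awm2 : G.Adj w m2) (awm3 : G.Adj w m3)
    (nvm1 : ¬ G.Adj v m1) (nvm2 : ¬ G.Adj v m2) (nvm3 : ¬ G.Adj v m3)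
    (nvw : ¬ G.Adj v w)
    (npq : ¬ G.Adj p q) (npr : ¬ G.Adj p r) (nqr : ¬ G.Adj q r)
    (npm2 : ¬ G.Adj p m2) (nqm3 : ¬ G.Adj q m3) (nrm1 : ¬ G.Adj r m1)
    (npw : ¬ G.Adj p w) (nqw : ¬ G.Adj q w) (nrw : ¬ G.Adj r w)
    (nm12 : ¬ G.Adj m1 m2) (nm13 : ¬ G.Adj m1 m3) (nm23 : ¬ G.Adj m2 m3)
    (evp : v ≠ p) (evq : v ≠ q) (evr : v ≠ r) (evm1 : v ≠ m1) (evm2 : v ≠ m2)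
    (evm3 : v ≠ m3) (evw : v ≠ w)
    (epq : p ≠ q) (epr : p ≠ r) (epm1 : p ≠ m1) (epm2 : p ≠ m2) (epm3 : p ≠ m3)
    (epw : p ≠ w)
    (eqr : q ≠ r) (eqm1 : q ≠ m1) (eqm2 : q ≠ m2) (eqm3 : q ≠ m3) (eqw : q ≠ w)
    (erm1 : r ≠ m1) (erm2 : r ≠ m2) (erm3 : r ≠ m3) (erw : r ≠ w)
    (em12 : m1 ≠ m2) (em13 : m1 ≠ m3) (em23 : m2 ≠ m3)
    (em1w : m1 ≠ w) (em2w : m2 ≠ w) (em3w : m3 ≠ w) :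
    Nonempty (cubeGraph 3 ↪g G) := by
  -- symmetrized facts
  have avp' := avp.symm; have avq' := avq.symm; have avr' := avr.symm
  have apm1' := apm1.symm; have aqm1' := aqm1.symm; have aqm2' := aqm2.symm
  have arm2' := arm2.symm; have apm3' := apm3.symm; have arm3' := arm3.symm
  have awm1' := awm1.symm; have awm2' := awm2.symm; have awm3' := awm3.symm
  have nvm1' : ¬ G.Adj m1 v := fun h => nvm1 h.symm
  have nvm2' : ¬ G.Adj m2 v := fun h => nvm2 h.symm
  have nvm3' : ¬ G.Adj m3 v := fun h => nvm3 h.symm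
  have nvw' : ¬ G.Adj w v := fun h => nvw h.symm
  have npq' : ¬ G.Adj q p := fun h => npq h.symm
  have npr' : ¬ G.Adj r p := fun h => npr h.symm
  have nqr' : ¬ G.Adj r q := fun h => nqr h.symm
  have npm2' : ¬ G.Adj m2 p := fun h => npm2 h.symm
  have nqm3' : ¬ G.Adj m3 q := fun h => nqm3 h.symm
  have nrm1' : ¬ G.Adj m1 r := fun h => nrm1 h.symm
  have npw' : ¬ G.Adj w p := fun h => npw h.symm
  have nqw' : ¬ G.Adj w q := fun h => nqw h.symm
  have nrw' : ¬ G.Adj w r := fun h => nrw h.symm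
  have nm12' : ¬ G.Adj m2 m1 := fun h => nm12 h.symm
  have nm13' : ¬ G.Adj m3 m1 := fun h => nm13 h.symm
  have nm23' : ¬ G.Adj m3 m2 := fun h => nm23 h.symm
  have evp' := evp.symm; have evq' := evq.symm; have evr' := evr.symm
  have evm1' := evm1.symm; have evm2' := evm2.symm; have evm3' := evm3.symm
  have evw' := evw.symm; have epq' := epq.symm; have epr' := epr.symm
  have epm1' := epm1.symm; have epm2' := epm2.symm; have epm3' := epm3.symm
  have epw' := epw.symm; have eqr' := eqr.symm; have eqm1' := eqm1.symm
  have eqm2' := eqm2.symm; have eqm3' := eqm3.symm; have eqw' := eqw.symm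
  have erm1' := erm1.symm; have erm2' := erm2.symm; have erm3' := erm3.symm
  have erw' := erw.symm; have em12' := em12.symm; have em13' := em13.symm
  have em23' := em23.symm; have em1w' := em1w.symm; have em2w' := em2w.symm
  have em3w' := em3w.symm
  set g : (Fin 3 → Fin 2) → V := fun x =>
    if x 0 = 0 then
      (if x 1 = 0 then (if x 2 = 0 then w else m2)
       else (if x 2 = 0 then m3 else r))
    else
      (if x 1 = 0 then (if x 2 = 0 then m1 else q)
       else (if x 2 = 0 then p else v)) with hg
  have hb : ∀ b : Fin 2, b = 0 ∨ b = 1 := by decide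
  refine ⟨⟨⟨g, ?_⟩, ?_⟩⟩
  · intro x y
    have hx : x = ![x 0, x 1, x 2] := by funext i; fin_cases i <;> rfl
    have hy : y = ![y 0, y 1, y 2] := by funext i; fin_cases i <;> rfl
    rcases hb (x 0) with h0 | h0 <;> rcases hb (x 1) with h1 | h1 <;>
      rcases hb (x 2) with h2 | h2 <;> rcases hb (y 0) with k0 | k0 <;>
      rcases hb (y 1) with k1 | k1 <;> rcases hb (y 2) with k2 | k2 <;>
      rw [h0, h1, h2] at hx <;> rw [k0, k1, k2] at hy <;> subst hx <;> subst hy <;>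
      simp only [g] <;> norm_num <;>
      first
        | rfl
        | (intro h; first | exact absurd h (by assumption) | exact absurd h (by simp_all))
  · intro x y
    show G.Adj (g x) (g y) ↔ (cubeGraph 3).Adj x y
    have hx : x = ![x 0, x 1, x 2] := by funext i; fin_cases i <;> rfl
    have hy : y = ![y 0, y 1, y 2] := by funext i; fin_cases i <;> rfl
    rcases hb (x 0) with h0 | h0 <;> rcases hb (x 1) with h1 | h1 <;>
      rcases hb (x 2) with h2 | h2 <;> rcases hb (y 0) with k0 | k0 <;>
      rcases hb (y 1) with k1 | k1 <;> rcases hb (y 2) with k2 | k2 <;>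
      rw [h0, h1, h2] at hx <;> rw [k0, k1, k2] at hy <;> subst hx <;> subst hy <;>
      simp only [g] <;> norm_num <;>
      first
        | exact iff_of_true (by assumption)
            (by simp only [cubeGraph, fromRel_adj, ExistsUnique]; decide)
        | exact iff_of_false (by assumption)
            (by simp only [cubeGraph, fromRel_adj, ExistsUnique]; decide)

/-- a vertex of a median cube-free graph has no three distinct downward neighbors
all lying in downward squares -/
lemma no_three_down (hG : IsMedianGraph G) (hcf : CubeFree G) (z v p q r : V) (k : ℕ)
    (hvp : G.Adj v p) (hvq : G.Adj v q) (hvr : G.Adj v r)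
    (hpq : p ≠ q) (hpr : p ≠ r) (hqr : q ≠ r)
    (hv : G.dist z v = k + 2) (hp : G.dist z p = k + 1) (hq : G.dist z q = k + 1)
    (hr : G.dist z r = k + 1) : False := by
  have hc := hG.1
  -- pairwise distance two among p,q,r
  have dpq : G.dist p q = 2 :=
    dist_eq_two hG hpq (not_adj_of_dist hG z (by omega) (by omega)) hvp hvq
  have dpr : G.dist p r = 2 :=
    dist_eq_two hG hpr (not_adj_of_dist hG z (by omega) (by omega)) hvp hvr
  have dqr : G.dist q r = 2 :=
    dist_eq_two hG hqr (not_adj_of_dist hG z (by omega) (by omega)) hvq hvr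
  -- the three bottom vertices
  obtain ⟨m1, ⟨apm1, aqm1, hm1⟩, hu1⟩ := unique_bot hG hvp hvq hpq hp hq
  obtain ⟨m2, ⟨aqm2, arm2, hm2⟩, hu2⟩ := unique_bot hG hvq hvr hqr hq hr
  obtain ⟨m3, ⟨apm3, arm3, hm3⟩, hu3⟩ := unique_bot hG hvp hvr hpr hp hr
  -- special non-adjacencies via no-K23
  have npm2 : ¬ G.Adj p m2 := by
    intro h
    have : m2 = v := k23 hG h.symm aqm2.symm arm2.symm hvp hvq hvr dpq dqr dpr
    rw [this] at hm2; omega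
  have nqm3 : ¬ G.Adj q m3 := by
    intro h
    have : m3 = v := k23 hG apm3.symm h.symm arm3.symm hvp hvq hvr dpq dqr dpr
    rw [this] at hm3; omega
  have nrm1 : ¬ G.Adj r m1 := by
    intro h
    have : m1 = v := k23 hG apm1.symm aqm1.symm h.symm hvp hvq hvr dpq dqr dpr
    rw [this] at hm1; omega
  -- the m's are pairwise distinct
  have em12 : m1 ≠ m2 := fun h => by
    rw [← h] at arm2; exact nrm1 arm2
  have em13 : m1 ≠ m3 := fun h => by
    rw [← h] at arm3; exact nrm1 arm3
  have em23 : m2 ≠ m3 := fun h => by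
    rw [← h] at apm3; exact npm2 apm3
  -- pairwise distance two among the m's
  have dm12 : G.dist m1 m2 = 2 :=
    dist_eq_two hG em12 (not_adj_of_dist hG z (by omega) (by omega)) aqm1 aqm2
  have dm13 : G.dist m1 m3 = 2 :=
    dist_eq_two hG em13 (not_adj_of_dist hG z (by omega) (by omega)) apm1 apm3
  have dm23 : G.dist m2 m3 = 2 :=
    dist_eq_two hG em23 (not_adj_of_dist hG z (by omega) (by omega)) arm2 arm3
  -- the point below the m's
  obtain ⟨w, ⟨f1, f2, f3⟩, -⟩ := hG.2 m1 m2 m3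
  rw [mem_interval] at f1 f2 f3
  rw [dm12] at f1; rw [dm23] at f2; rw [dm13] at f3
  have c1 := dist_comm' G m2 w
  have c2 := dist_comm' G m3 w
  have g1 : G.dist m1 w = 1 := by omega
  have g2 : G.dist m2 w = 1 := by omega
  have g3 : G.dist m3 w = 1 := by omega
  have awm1 : G.Adj w m1 := (SimpleGraph.dist_eq_one_iff_adj.mp g1).symm
  have awm2 : G.Adj w m2 := (SimpleGraph.dist_eq_one_iff_adj.mp g2).symm
  have awm3 : G.Adj w m3 := (SimpleGraph.dist_eq_one_iff_adj.mp g3).symm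
  -- distance of w from the basepoint
  have hwdist := adj_dist hG z awm1.symm
  rw [hm1] at hwdist
  have hw : G.dist z w + 1 = k := by
    rcases hwdist with h | h
    · exfalso
      -- w would be at distance k+1: both m1 and m3 are medians of (p, w, z)
      have hwp : w ≠ p := fun h' => npm2 (h' ▸ awm2)
      have dpw : G.dist p w = 2 := by
        refine dist_eq_two hG (Ne.symm hwp) ?_ apm1.symm awm1.symm
        exact not_adj_of_dist hG z (by omega) (by omega)
      obtain ⟨mm, -, hu⟩ := hG.2 p w z
      have key : ∀ u : V, G.Adj p u → G.Adj w u → G.dist z u = k → u = mm := by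
        intro u u1 u2 u3
        apply hu
        have b1 := adj_dist_one u1
        have b2 := adj_dist_one u2
        have c3 := dist_comm' G u w
        have c4 := dist_comm' G u z
        have c5 := dist_comm' G w z
        have c6 := dist_comm' G p z
        refine ⟨?_, ?_, ?_⟩
        · show G.dist p u + G.dist u w = G.dist p w
          omega
        · show G.dist w u + G.dist u z = G.dist w z
          omega
        · show G.dist p u + G.dist u z = G.dist p z
          omega
      have e1 : m1 = mm := key m1 apm1 awm1 hm1
      have e3 : m3 = mm := key m3 apm3 awm3 hm3
      exact em13 (e1.trans e3.symm)
    · omega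
  -- now k = j + 1 for j := dist z w
  set j := G.dist z w with hj
  -- build a Q3 and contradict cube-freeness
  apply hcf
  have hkj : k = j + 1 := hw.symm
  refine cube_embed hvp hvq hvr apm1 aqm1 aqm2 arm2 apm3 arm3 awm1 awm2 awm3
    (not_adj_of_dist hG z (by omega) (by omega))
    (not_adj_of_dist hG z (by omega) (by omega))
    (not_adj_of_dist hG z (by omega) (by omega))
    (not_adj_of_dist hG z (by omega) (by omega))
    (not_adj_of_dist hG z (by omega) (by omega))
    (not_adj_of_dist hG z (by omega) (by omega))
    (not_adj_of_dist hG z (by omega) (by omega))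
    npm2 nqm3 nrm1
    (not_adj_of_dist hG z (by omega) (by omega))
    (not_adj_of_dist hG z (by omega) (by omega))
    (not_adj_of_dist hG z (by omega) (by omega))
    (not_adj_of_dist hG z (by omega) (by omega))
    (not_adj_of_dist hG z (by omega) (by omega))
    (not_adj_of_dist hG z (by omega) (by omega))
    (ne_of_dist (G := G) z (by omega)) (ne_of_dist (G := G) z (by omega)) (ne_of_dist (G := G) z (by omega))
    (ne_of_dist (G := G) z (by omega)) (ne_of_dist (G := G) z (by omega)) (ne_of_dist (G := G) z (by omega))
    (ne_of_dist (G := G) z (by omega))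
    hpq hpr (ne_of_dist (G := G) z (by omega)) (ne_of_dist (G := G) z (by omega)) (ne_of_dist (G := G) z (by omega))
    (ne_of_dist (G := G) z (by omega))
    hqr (ne_of_dist (G := G) z (by omega)) (ne_of_dist (G := G) z (by omega)) (ne_of_dist (G := G) z (by omega))
    (ne_of_dist (G := G) z (by omega))
    (ne_of_dist (G := G) z (by omega)) (ne_of_dist (G := G) z (by omega)) (ne_of_dist (G := G) z (by omega))
    (ne_of_dist (G := G) z (by omega))
    em12 em13 em23
    (ne_of_dist (G := G) z (by omega)) (ne_of_dist (G := G) z (by omega)) (ne_of_dist (G := G) z (by omega))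

lemma square_of_fourCycle [DecidableEq V] {t : Finset V} (h4 : t.card = 4)
    (he : Nonempty (G.induce (↑t : Set V) ≃g SimpleGraph.cycleGraph 4)) :
    ∃ a b c d : V, t = {a, b, c, d} ∧ G.Adj a b ∧ G.Adj b c ∧ G.Adj c d ∧ G.Adj d a ∧
      ¬ G.Adj a c ∧ ¬ G.Adj b d ∧ a ≠ c ∧ b ≠ d := by
  obtain ⟨e⟩ := he
  let f : Fin 4 → (↑t : Set V) := fun i => e.symm i
  have hadj : ∀ i j : Fin 4, (cycleGraph 4).Adj i j ↔ G.Adj (f i) (f j) := by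
    intro i j
    rw [show G.Adj (f i) (f j) ↔ (G.induce (↑t : Set V)).Adj (f i) (f j) from Iff.rfl]
    exact (e.symm.map_adj_iff).symm
  have hne : ∀ i j : Fin 4, i ≠ j → ((f i : V) ≠ (f j : V)) := by
    intro i j hij hv
    exact hij (e.symm.injective (Subtype.ext hv))
  refine ⟨f 0, f 1, f 2, f 3, ?_, ?_, ?_, ?_, ?_, ?_, ?_, ?_, ?_⟩
  · have hsub : ({(f 0 : V), (f 1 : V), (f 2 : V), (f 3 : V)} : Finset V) ⊆ t := by
      intro x hx
      simp only [Finset.mem_insert, Finset.mem_singleton] at hx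
      rcases hx with h | h | h | h <;> rw [h] <;> exact (f _).2
    have hcard : ({(f 0 : V), (f 1 : V), (f 2 : V), (f 3 : V)} : Finset V).card = 4 := by
      rw [Finset.card_insert_of_notMem (by
            simp [hne 0 1 (by decide), hne 0 2 (by decide), hne 0 3 (by decide)]),
          Finset.card_insert_of_notMem (by
            simp [hne 1 2 (by decide), hne 1 3 (by decide)]),
          Finset.card_insert_of_notMem (by simp [hne 2 3 (by decide)]),
          Finset.card_singleton]
    exact (Finset.eq_of_subset_of_card_le hsub (by omega)).symm
  · exact (hadj 0 1).mp (by decide)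
  · exact (hadj 1 2).mp (by decide)
  · exact (hadj 2 3).mp (by decide)
  · exact (hadj 3 0).mp (by decide)
  · exact fun h => (by decide : ¬ (cycleGraph 4).Adj 0 2) ((hadj 0 2).mpr h)
  · exact fun h => (by decide : ¬ (cycleGraph 4).Adj 1 3) ((hadj 1 3).mpr h)
  · exact hne 0 2 (by decide)
  · exact hne 1 3 (by decide)

end Aux

/-- A finite cube-free median graph with `n` vertices has at most `n`
four-cycles (4-element vertex subsets inducing a cycle of length 4). -/
theorem fourCycles_le_card {V : Type*} [Fintype V] (G : SimpleGraph V)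
    (hG : IsMedianGraph G) (hcf : CubeFree G) :
    {t : Finset V | IsFourCycleIn G Set.univ t}.ncard ≤ Fintype.card V := by
  classical
  have hc := hG.1
  have hneV : Nonempty V := hc.nonempty
  obtain ⟨z⟩ := hneV
  set S := {t : Finset V | IsFourCycleIn G Set.univ t} with hS
  -- structure of a member of S relative to z, with a distinguished top vertex
  have key : ∀ t ∈ S, ∃ (k : ℕ) (v p q cc : V), t = {v, p, q, cc} ∧
      G.dist z v = k + 2 ∧ G.Adj v p ∧ G.Adj v q ∧ p ≠ q ∧
      G.dist z p = k + 1 ∧ G.dist z q = k + 1 ∧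
      G.Adj p cc ∧ G.Adj q cc ∧ G.dist z cc = k := by
    intro t ht
    obtain ⟨-, h4, he⟩ := ht
    obtain ⟨a, b, c, d, hteq, hab, hbc, hcd, hda, hac, hbd, hac', hbd'⟩ :=
      square_of_fourCycle h4 he
    have work : ∀ a b c d : V, G.Adj a b → G.Adj b c → G.Adj c d → G.Adj d a →
        ¬ G.Adj a c → ¬ G.Adj b d → a ≠ c → b ≠ d →
        G.dist z b ≤ G.dist z a → G.dist z c ≤ G.dist z a → G.dist z d ≤ G.dist z a →
        ∃ (k : ℕ) (v p q cc : V), ({a, b, c, d} : Finset V) = {v, p, q, cc} ∧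
          G.dist z v = k + 2 ∧ G.Adj v p ∧ G.Adj v q ∧ p ≠ q ∧
          G.dist z p = k + 1 ∧ G.dist z q = k + 1 ∧
          G.Adj p cc ∧ G.Adj q cc ∧ G.dist z cc = k := by
      intro a b c d hab hbc hcd hda hac hbd hac' hbd' m1 m2 m3
      obtain ⟨k, g1, g2, g3, g4⟩ := square_top hG z hab hbc hcd hda hac hbd hac' hbd' m1 m2 m3
      refine ⟨k, a, b, d, c, ?_, g1, hab, hda.symm, hbd', g2, g3, hbc, hcd.symm, g4⟩
      ext x
      simp only [Finset.mem_insert, Finset.mem_singleton]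
      tauto
    obtain ⟨x, hx1, hx2⟩ := Finset.exists_max_image ({a, b, c, d} : Finset V)
      (G.dist z) ⟨a, by simp⟩
    simp only [Finset.mem_insert, Finset.mem_singleton] at hx1
    have hperm : ∀ a' b' c' d' : V, ({a', b', c', d'} : Finset V) = {a, b, c, d} →
        (∃ (k : ℕ) (v p q cc : V), ({a', b', c', d'} : Finset V) = {v, p, q, cc} ∧
          G.dist z v = k + 2 ∧ G.Adj v p ∧ G.Adj v q ∧ p ≠ q ∧
          G.dist z p = k + 1 ∧ G.dist z q = k + 1 ∧
          G.Adj p cc ∧ G.Adj q cc ∧ G.dist z cc = k) →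
        ∃ (k : ℕ) (v p q cc : V), t = {v, p, q, cc} ∧
          G.dist z v = k + 2 ∧ G.Adj v p ∧ G.Adj v q ∧ p ≠ q ∧
          G.dist z p = k + 1 ∧ G.dist z q = k + 1 ∧
          G.Adj p cc ∧ G.Adj q cc ∧ G.dist z cc = k := by
      intro a' b' c' d' hpe ⟨k, v, p, q, cc, heq, rest⟩
      exact ⟨k, v, p, q, cc, by rw [hteq, ← hpe, heq], rest⟩
    have hmem : ∀ y : V, y ∈ ({a, b, c, d} : Finset V) → G.dist z y ≤ G.dist z x :=
      hx2
    have ma : a ∈ ({a, b, c, d} : Finset V) := by simp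
    have mb : b ∈ ({a, b, c, d} : Finset V) := by simp
    have mc : c ∈ ({a, b, c, d} : Finset V) := by simp
    have md : d ∈ ({a, b, c, d} : Finset V) := by simp
    rcases hx1 with rfl | rfl | rfl | rfl
    · exact hperm x b c d rfl
        (work x b c d hab hbc hcd hda hac hbd hac' hbd' (hmem b mb) (hmem c mc) (hmem d md))
    · refine hperm x c d a ?_
        (work x c d a hbc hcd hda hab hbd (fun h => hac h.symm) hbd' (fun h => hac' h.symm)
          (hmem c mc) (hmem d md) (hmem a ma))
      ext y
      simp only [Finset.mem_insert, Finset.mem_singleton]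
      tauto
    · refine hperm x d a b ?_
        (work x d a b hcd hda hab hbc (fun h => hac h.symm) (fun h => hbd h.symm)
          (fun h => hac' h.symm) (fun h => hbd' h.symm)
          (hmem d md) (hmem a ma) (hmem b mb))
      ext y
      simp only [Finset.mem_insert, Finset.mem_singleton]
      tauto
    · refine hperm x a b c ?_
        (work x a b c hda hab hbc hcd (fun h => hbd h.symm) hac
          (fun h => hbd' h.symm) hac'
          (hmem a ma) (hmem b mb) (hmem c mc))
      ext y
      simp only [Finset.mem_insert, Finset.mem_singleton]
      tauto
  -- the "top vertex" map
  let F : Finset V → V := fun t =>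
    if h : ∃ v, v ∈ t ∧ ∀ u ∈ t, G.dist z u ≤ G.dist z v then h.choose else z
  have hFspec : ∀ t : Finset V, (∃ v, v ∈ t ∧ ∀ u ∈ t, G.dist z u ≤ G.dist z v) →
      F t ∈ t ∧ ∀ u ∈ t, G.dist z u ≤ G.dist z (F t) := by
    intro t h
    simp only [F, dif_pos h]
    exact h.choose_spec
  have key2 : ∀ t ∈ S, ∃ (k : ℕ) (p q cc : V), t = {F t, p, q, cc} ∧
      G.dist z (F t) = k + 2 ∧ G.Adj (F t) p ∧ G.Adj (F t) q ∧ p ≠ q ∧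
      G.dist z p = k + 1 ∧ G.dist z q = k + 1 ∧
      G.Adj p cc ∧ G.Adj q cc ∧ G.dist z cc = k := by
    intro t ht
    obtain ⟨k, v, p, q, cc, hteq, hv, hvp, hvq, hpq, hp, hq, hpc, hqc, hcc⟩ := key t ht
    have hex : ∃ v', v' ∈ t ∧ ∀ u ∈ t, G.dist z u ≤ G.dist z v' := by
      refine ⟨v, by rw [hteq]; simp, ?_⟩
      intro u hu
      rw [hteq] at hu
      simp only [Finset.mem_insert, Finset.mem_singleton] at hu
      rcases hu with rfl | rfl | rfl | rfl <;> omega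
    obtain ⟨hF1, hF2⟩ := hFspec t hex
    have hFv : F t = v := by
      have hmem' : F t ∈ ({v, p, q, cc} : Finset V) := by rw [← hteq]; exact hF1
      simp only [Finset.mem_insert, Finset.mem_singleton] at hmem'
      have hle := hF2 v (by rw [hteq]; simp)
      rcases hmem' with h | h | h | h
      · exact h
      · rw [h] at hle; omega
      · rw [h] at hle; omega
      · rw [h] at hle; omega
    rw [hFv]
    exact ⟨k, p, q, cc, hteq, hv, hvp, hvq, hpq, hp, hq, hpc, hqc, hcc⟩
  -- injectivity of F on S
  have hinj : Set.InjOn F S := by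
    intro t1 h1 t2 h2 hF
    obtain ⟨k1, p1, q1, c1, ht1, hv1, hvp1, hvq1, hpq1, hp1, hq1, hpc1, hqc1, hcc1⟩ :=
      key2 t1 h1
    obtain ⟨k2, p2, q2, c2, ht2, hv2, hvp2, hvq2, hpq2, hp2, hq2, hpc2, hqc2, hcc2⟩ :=
      key2 t2 h2
    rw [← hF] at ht2 hv2 hvp2 hvq2
    set v := F t1 with hv
    have hk : k2 = k1 := by omega
    subst hk
    by_cases hsame : (p2 = p1 ∧ q2 = q1) ∨ (p2 = q1 ∧ q2 = p1)
    · obtain ⟨m, -, hu⟩ := unique_bot hG hvp1 hvq1 hpq1 hp1 hq1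
      have e1 : c1 = m := hu c1 ⟨hpc1, hqc1, hcc1⟩
      have e2 : c2 = m := by
        rcases hsame with ⟨hpp, hqq⟩ | ⟨hpp, hqq⟩
        · exact hu c2 ⟨hpp ▸ hpc2, hqq ▸ hqc2, hcc2⟩
        · exact hu c2 ⟨hqq ▸ hqc2, hpp ▸ hpc2, hcc2⟩
      have hc12 : c2 = c1 := by rw [e1, e2]
      rw [ht1, ht2, hc12]
      rcases hsame with ⟨hpp, hqq⟩ | ⟨hpp, hqq⟩
      · rw [hpp, hqq]
      · rw [hpp, hqq]
        ext y
        simp only [Finset.mem_insert, Finset.mem_singleton]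
        tauto
    · have hr : (p2 ≠ p1 ∧ p2 ≠ q1) ∨ (q2 ≠ p1 ∧ q2 ≠ q1) := by
        by_contra hcon
        push_neg at hcon
        obtain ⟨h1', h2'⟩ := hcon
        have e1 : p2 = p1 ∨ p2 = q1 := by tauto
        have e2 : q2 = p1 ∨ q2 = q1 := by tauto
        rcases e1 with e1 | e1 <;> rcases e2 with e2 | e2
        · exact hpq2 (e1.trans e2.symm)
        · exact hsame (Or.inl ⟨e1, e2⟩)
        · exact hsame (Or.inr ⟨e1, e2⟩)
        · exact hpq2 (e1.trans e2.symm)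
      rcases hr with ⟨n1, n2⟩ | ⟨n1, n2⟩
      · exact (no_three_down hG hcf z v p1 q1 p2 k2 hvp1 hvq1 hvp2 hpq1 n1.symm n2.symm
          hv1 hp1 hq1 hp2).elim
      · exact (no_three_down hG hcf z v p1 q1 q2 k2 hvp1 hvq1 hvq2 hpq1 n1.symm n2.symm
          hv1 hp1 hq1 hq2).elim
  calc S.ncard = (F '' S).ncard := (Set.ncard_image_of_injOn hinj).symm
    _ ≤ (Set.univ : Set V).ncard := Set.ncard_le_ncard (Set.subset_univ _) Set.finite_univ
    _ = Fintype.card V := by rw [Set.ncard_univ, Nat.card_eq_fintype_card]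
end

section
/- Let G be a finite median graph and let p and q be vertices. If s is a cut vertex of the subgraph of G induced by I(p,q) (i.e., removing s disconnects that induced subgraph), then s lies on every shortest path between p and q in G. -/
open SimpleGraph Finset

private lemma walk_reach {V : Type*} (G : SimpleGraph V) (S : Set V) {a b : V}
    (w : G.Walk a b) (h : ∀ x ∈ w.support, x ∈ S) (ha : a ∈ S) (hb : b ∈ S) :
    (G.induce S).Reachable ⟨a, ha⟩ ⟨b, hb⟩ := by
  induction w with
  | nil => rfl
  | @cons a c b hadj w' ih =>
    have hc : c ∈ S := h c (by simp)
    have adj : (G.induce S).Adj ⟨a, ha⟩ ⟨c, hc⟩ := by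
      simp [SimpleGraph.comap_adj, hadj]
    exact adj.reachable.trans (ih (fun x hx => h x (by simp [hx])) hc hb)

private lemma supp_mem_interval {V : Type*} {G : SimpleGraph V} {p q x : V}
    (hconn : G.Connected) (w : G.Walk p q) (hw : w.length = G.dist p q)
    (hx : x ∈ w.support) : x ∈ interval G p q := by
  obtain ⟨w1, w2, rfl⟩ := SimpleGraph.Walk.mem_support_iff_exists_append.mp hx
  have h1 : G.dist p x ≤ w1.length := SimpleGraph.dist_le w1
  have h2 : G.dist x q ≤ w2.length := SimpleGraph.dist_le w2
  have h3 : G.dist p q ≤ G.dist p x + G.dist x q := hconn.dist_triangle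
  have h4 : (w1.append w2).length = w1.length + w2.length := SimpleGraph.Walk.length_append _ _
  simp only [interval, Set.mem_setOf_eq]
  omega

private lemma interval_subset {V : Type*} {G : SimpleGraph V} {p q x : V}
    (hconn : G.Connected) (hx : x ∈ interval G p q) : interval G p x ⊆ interval G p q := by
  intro y hy
  simp only [interval, Set.mem_setOf_eq] at *
  have h1 : G.dist y q ≤ G.dist y x + G.dist x q := hconn.dist_triangle
  have h2 : G.dist p q ≤ G.dist p y + G.dist y q := hconn.dist_triangle
  omega

/-- In a finite median graph, a cut vertex `s` of the subgraph induced by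
`I(p,q)` lies on every shortest path between `p` and `q`. -/
theorem cut_vertex_on_all_shortest_paths {V : Type*} [Fintype V] (G : SimpleGraph V)
    (hG : IsMedianGraph G) (p q s : V) (hs : s ∈ interval G p q)
    (hcut : ¬ (G.induce (interval G p q \ {s})).Connected) :
    ∀ w : G.Walk p q, w.length = G.dist p q → s ∈ w.support := by
  intro w hw
  by_contra hns
  obtain ⟨hconn, -⟩ := hG
  set S : Set V := interval G p q \ {s} with hS
  have hpI : p ∈ interval G p q := by simp [interval]
  have hqI : q ∈ interval G p q := by simp [interval]
  have hp : p ∈ S := ⟨hpI, fun h => hns (h ▸ w.start_mem_support)⟩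
  have hq : q ∈ S := ⟨hqI, fun h => hns (h ▸ w.end_mem_support)⟩
  have hwS : ∀ x ∈ w.support, x ∈ S := fun x hx =>
    ⟨supp_mem_interval hconn w hw hx, fun h => hns (h ▸ hx)⟩
  have rpq : (G.induce S).Reachable ⟨p, hp⟩ ⟨q, hq⟩ := walk_reach G S w hwS hp hq
  -- every x ∈ S reaches p or q
  have key : ∀ x (hx : x ∈ S), (G.induce S).Reachable ⟨x, hx⟩ ⟨p, hp⟩ := by
    intro x hx
    obtain ⟨hxI, hxs⟩ := hx
    have hxs' : x ≠ s := by simpa using hxs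
    have hcases : s ∉ interval G p x ∨ s ∉ interval G x q := by
      by_contra hc
      push_neg at hc
      obtain ⟨h1, h2⟩ := hc
      simp only [interval, Set.mem_setOf_eq] at h1 h2 hxI hs
      have hcomm : G.dist x s = G.dist s x := SimpleGraph.dist_comm
      have hz : G.dist s x = 0 := by omega
      exact hxs' ((hconn.dist_eq_zero_iff.mp hz)).symm
    rcases hcases with hcase | hcase
    · obtain ⟨u, hu⟩ := (hconn p x).exists_walk_length_eq_dist
      have huS : ∀ y ∈ u.support, y ∈ S := by
        intro y hy
        have hyI : y ∈ interval G p x := supp_mem_interval hconn u hu hy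
        exact ⟨interval_subset hconn hxI hyI, fun h => hcase (h ▸ hyI)⟩
      exact (walk_reach G S u huS hp ⟨hxI, hxs⟩).symm
    · obtain ⟨u, hu⟩ := (hconn x q).exists_walk_length_eq_dist
      have huS : ∀ y ∈ u.support, y ∈ S := by
        intro y hy
        have hyI : y ∈ interval G x q := supp_mem_interval hconn u hu hy
        have hyI' : y ∈ interval G p q := by
          have hxI' : x ∈ interval G q p := by
            simp only [interval, Set.mem_setOf_eq] at hxI ⊢
            have c1 : G.dist q x = G.dist x q := SimpleGraph.dist_comm
            have c2 : G.dist x p = G.dist p x := SimpleGraph.dist_comm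
            have c3 : G.dist q p = G.dist p q := SimpleGraph.dist_comm
            omega
          have hyI2 : y ∈ interval G q x := by
            simp only [interval, Set.mem_setOf_eq] at hyI ⊢
            have c1 : G.dist q y = G.dist y q := SimpleGraph.dist_comm
            have c2 : G.dist y x = G.dist x y := SimpleGraph.dist_comm
            have c3 : G.dist q x = G.dist x q := SimpleGraph.dist_comm
            omega
          have := interval_subset hconn hxI' hyI2
          have hmem := this
          have : y ∈ interval G q p := this
          simp only [interval, Set.mem_setOf_eq] at this ⊢
          have c1 : G.dist q y = G.dist y q := SimpleGraph.dist_comm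
          have c2 : G.dist y p = G.dist p y := SimpleGraph.dist_comm
          have c3 : G.dist q p = G.dist p q := SimpleGraph.dist_comm
          omega
        exact ⟨hyI', fun h => hcase (h ▸ hyI)⟩
      exact (walk_reach G S u huS ⟨hxI, hxs⟩ hq).trans rpq.symm
  apply hcut
  have : Nonempty ↥S := ⟨⟨p, hp⟩⟩
  exact ⟨fun a b => (key a a.2).trans (key b b.2).symm⟩
end

section
/- Let G be a finite cube-free median graph, let p and q be vertices, and let f be an isometric embedding of I(p,q) into ℤ² with the ℓ1 distance. Then the image f(I(p,q)) is orthogonally convex: whenever u, v ∈ I(p,q) satisfy f(u)_i = f(v)_i for some coordinate i ∈ {1,2}, every lattice point on the line segment between f(u) and f(v) belongs to f(I(p,q)). -/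
open SimpleGraph Finset

namespace OrthoAux
variable {V : Type*} {G : SimpleGraph V}
lemma mem_interval_iff {u v w : V} :
    w ∈ interval G u v ↔ G.dist u w + G.dist w v = G.dist u v := Iff.rfl
lemma interval_comm {u v w : V} : w ∈ interval G u v ↔ w ∈ interval G v u := by
  simp only [mem_interval_iff]
  rw [SimpleGraph.dist_comm (u := u) (v := w), SimpleGraph.dist_comm (u := w) (v := v),
    SimpleGraph.dist_comm (u := u) (v := v)]
  omega
lemma proj_mem (hconn : G.Connected) {p q u t : V} (hu : u ∈ interval G p q)
    (ht : t ∈ interval G u q) : t ∈ interval G p q := by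
  simp only [mem_interval_iff] at *
  have h1 : G.dist p t ≤ G.dist p u + G.dist u t := hconn.dist_triangle
  have h2 : G.dist p q ≤ G.dist p t + G.dist t q := hconn.dist_triangle
  omega
lemma dist_getVert_bounds (hconn : G.Connected) {u v : V} (p : G.Walk u v) :
    ∀ k : ℕ, G.dist u (p.getVert k) ≤ k ∧ G.dist (p.getVert k) v ≤ p.length - k := by
  induction p with
  | nil => intro k; simp [SimpleGraph.Walk.getVert, SimpleGraph.dist_self]
  | @cons a b c h q ih =>
    intro k
    cases k with
    | zero =>
      refine ⟨by simp [SimpleGraph.dist_self], ?_⟩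
      simpa using SimpleGraph.dist_le (SimpleGraph.Walk.cons h q)
    | succ k =>
      rw [SimpleGraph.Walk.getVert_cons_succ]
      refine ⟨?_, ?_⟩
      · have h1 : G.dist a b ≤ 1 := by
          simpa using SimpleGraph.dist_le (SimpleGraph.Walk.cons h SimpleGraph.Walk.nil)
        have h2 : G.dist a (q.getVert k) ≤ G.dist a b + G.dist b (q.getVert k) :=
          hconn.dist_triangle
        have h3 := (ih k).1
        omega
      · have h2 := (ih k).2
        simp only [SimpleGraph.Walk.length_cons]
        omega

lemma exists_intermediate (hconn : G.Connected)
    (hmed : ∀ x y z : V, ∃! m : V,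
      m ∈ interval G x y ∧ m ∈ interval G y z ∧ m ∈ interval G x z) (p q : V) :
    ∀ n : ℕ, ∀ u v : V, ∀ k : ℕ, G.dist u v = n → u ∈ interval G p q → v ∈ interval G p q →
      k ≤ n → ∃ w, w ∈ interval G p q ∧ G.dist u w = k ∧ G.dist w v = n - k := by
  intro n
  induction n using Nat.strong_induction_on with
  | _ n IH =>
  intro u v k hn hu hv hk
  rcases Nat.eq_zero_or_pos k with hk0 | hkpos
  · subst hk0
    exact ⟨u, hu, SimpleGraph.dist_self, by simpa using hn⟩
  rcases eq_or_lt_of_le hk with hkn | hkn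
  · refine ⟨v, hv, by omega, ?_⟩
    rw [SimpleGraph.dist_self]; omega
  -- now 0 < k < n
  obtain ⟨t, ⟨ht_uv, ht_vq, ht_uq⟩, -⟩ := hmed u v q
  obtain ⟨s, ⟨hs_vu, hs_up, hs_vp⟩, -⟩ := hmed v u p
  have htpq : t ∈ interval G p q := proj_mem hconn hu ht_uq
  have hspq : s ∈ interval G p q := by
    rw [interval_comm]
    exact proj_mem hconn (interval_comm.mp hv) hs_vp
  have split : ∀ t, t ∈ interval G p q → t ∈ interval G u v → t ≠ u → t ≠ v →
      ∃ w, w ∈ interval G p q ∧ G.dist u w = k ∧ G.dist w v = n - k := by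
    intro t htpq htuv htu htv
    have ha : G.dist u t + G.dist t v = n := by rw [← hn]; exact htuv
    have hapos : 0 < G.dist u t := hconn.pos_dist_of_ne (Ne.symm htu)
    have hbpos : 0 < G.dist t v := hconn.pos_dist_of_ne htv
    rcases le_or_gt k (G.dist u t) with hkle | hkgt
    · obtain ⟨w, hw, hw1, hw2⟩ := IH (G.dist u t) (by omega) u t k rfl hu htpq hkle
      refine ⟨w, hw, hw1, ?_⟩
      have t1 : G.dist w v ≤ G.dist w t + G.dist t v := hconn.dist_triangle
      have t2 : G.dist u v ≤ G.dist u w + G.dist w v := hconn.dist_triangle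
      omega
    · obtain ⟨w, hw, hw1, hw2⟩ :=
        IH (G.dist t v) (by omega) t v (k - G.dist u t) rfl htpq hv (by omega)
      have t1 : G.dist u w ≤ G.dist u t + G.dist t w := hconn.dist_triangle
      have t2 : G.dist u v ≤ G.dist u w + G.dist w v := hconn.dist_triangle
      exact ⟨w, hw, by omega, by omega⟩
  have c1 : G.dist v u = G.dist u v := SimpleGraph.dist_comm
  have c2 : G.dist u p = G.dist p u := SimpleGraph.dist_comm
  have c3 : G.dist v p = G.dist p v := SimpleGraph.dist_comm
  simp only [mem_interval_iff] at hu hv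
  by_cases htu : t = u
  · by_cases hsv : s = v
    · -- t = u, s = v : geodesic case (config p .. v .. u .. q)
      have ht_vq' : G.dist v u + G.dist u q = G.dist v q := by
        have := htu ▸ ht_vq; exact this
      have hs_up' : G.dist u v + G.dist v p = G.dist u p := by
        have := hsv ▸ hs_up; exact this
      obtain ⟨W, hW⟩ := (hconn u v).exists_walk_length_eq_dist
      have hb := dist_getVert_bounds hconn W k
      rw [hW, hn] at hb
      set z := W.getVert k with hz
      have t3 : G.dist u v ≤ G.dist u z + G.dist z v := hconn.dist_triangle
      have hz1 : G.dist u z = k := by omega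
      have hz2 : G.dist z v = n - k := by omega
      refine ⟨z, ?_, hz1, hz2⟩
      simp only [mem_interval_iff]
      have t4 : G.dist p z ≤ G.dist p v + G.dist v z := hconn.dist_triangle
      have t5 : G.dist z q ≤ G.dist z u + G.dist u q := hconn.dist_triangle
      have t6 : G.dist p q ≤ G.dist p z + G.dist z q := hconn.dist_triangle
      have c4 : G.dist v z = G.dist z v := SimpleGraph.dist_comm
      have c5 : G.dist z u = G.dist u z := SimpleGraph.dist_comm
      omega
    · by_cases hsu : s = u
      · -- t = u, s = u : contradiction
        have ht_vq' : G.dist v u + G.dist u q = G.dist v q := by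
          have := htu ▸ ht_vq; exact this
        have hs_vp' : G.dist v u + G.dist u p = G.dist v p := by
          have := hsu ▸ hs_vp; exact this
        omega
      · exact split s hspq (interval_comm.mp hs_vu) hsu hsv
  · by_cases htv : t = v
    · by_cases hsu : s = u
      · -- t = v, s = u : geodesic case (config p .. u .. v .. q)
        have ht_uq' : G.dist u v + G.dist v q = G.dist u q := by
          have := htv ▸ ht_uq; exact this
        have hs_vp' : G.dist v u + G.dist u p = G.dist v p := by
          have := hsu ▸ hs_vp; exact this
        obtain ⟨W, hW⟩ := (hconn u v).exists_walk_length_eq_dist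
        have hb := dist_getVert_bounds hconn W k
        rw [hW, hn] at hb
        set z := W.getVert k with hz
        have t3 : G.dist u v ≤ G.dist u z + G.dist z v := hconn.dist_triangle
        have hz1 : G.dist u z = k := by omega
        have hz2 : G.dist z v = n - k := by omega
        refine ⟨z, ?_, hz1, hz2⟩
        simp only [mem_interval_iff]
        have t4 : G.dist p z ≤ G.dist p u + G.dist u z := hconn.dist_triangle
        have t5 : G.dist z q ≤ G.dist z v + G.dist v q := hconn.dist_triangle
        have t6 : G.dist p q ≤ G.dist p z + G.dist z q := hconn.dist_triangle
        have c5 : G.dist z v = G.dist v z := SimpleGraph.dist_comm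
        omega
      · by_cases hsv : s = v
        · -- t = v, s = v : contradiction
          have ht_uq' : G.dist u v + G.dist v q = G.dist u q := by
            have := htv ▸ ht_uq; exact this
          have hs_up' : G.dist u v + G.dist v p = G.dist u p := by
            have := hsv ▸ hs_up; exact this
          omega
        · exact split s hspq (interval_comm.mp hs_vu) hsu hsv
    · exact split t htpq ht_uv htu htv
lemma coord_case (hconn : G.Connected)
    (hmed : ∀ x y z : V, ∃! m : V,
      m ∈ interval G x y ∧ m ∈ interval G y z ∧ m ∈ interval G x z)
    (p q : V) (f : V → ℤ × ℤ)
    (hf : ∀ u ∈ interval G p q, ∀ v ∈ interval G p q,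
      (G.dist u v : ℤ) = |(f u).1 - (f v).1| + |(f u).2 - (f v).2|)
    {u v : V} (hu : u ∈ interval G p q) (hv : v ∈ interval G p q)
    (h1 : (f u).1 = (f v).1) (hle : (f u).2 ≤ (f v).2) {c : ℤ}
    (hc1 : (f u).2 ≤ c) (hc2 : c ≤ (f v).2) :
    ∃ w ∈ interval G p q, f w = ((f u).1, c) := by
  have e3 : (G.dist u v : ℤ) = (f v).2 - (f u).2 := by
    rw [hf u hu v hv, h1, sub_self, abs_zero, zero_add, abs_sub_comm,
      abs_of_nonneg (sub_nonneg.mpr hle)]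
  set n := G.dist u v with hn
  set k := (c - (f u).2).toNat with hkdef
  have ek : (k : ℤ) = c - (f u).2 := Int.toNat_of_nonneg (by omega)
  have hkn : k ≤ n := by omega
  obtain ⟨w, hw, hw1, hw2⟩ := exists_intermediate hconn hmed p q n u v k rfl hu hv hkn
  have e1 : c - (f u).2 = |(f u).1 - (f w).1| + |(f u).2 - (f w).2| := by
    rw [← ek, ← hw1]; exact hf u hu w hw
  have e2 : (n : ℤ) - (c - (f u).2) = |(f w).1 - (f v).1| + |(f w).2 - (f v).2| := by
    rw [← ek, ← Nat.cast_sub hkn, ← hw2]; exact hf w hw v hv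
  refine ⟨w, hw, ?_⟩
  have key : (f w).1 = (f u).1 ∧ (f w).2 = c := by
    rcases abs_cases ((f u).1 - (f w).1) with ⟨ha, ha0⟩ | ⟨ha, ha0⟩ <;>
    rcases abs_cases ((f u).2 - (f w).2) with ⟨hb, hb0⟩ | ⟨hb, hb0⟩ <;>
    rcases abs_cases ((f w).1 - (f v).1) with ⟨hc', hc0⟩ | ⟨hc', hc0⟩ <;>
    rcases abs_cases ((f w).2 - (f v).2) with ⟨hd, hd0⟩ | ⟨hd, hd0⟩ <;>
    rw [ha, hb] at e1 <;> rw [hc', hd] at e2 <;>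
    exact ⟨by omega, by omega⟩
  exact Prod.ext_iff.mpr ⟨key.1, key.2⟩

lemma part1 (hconn : G.Connected)
    (hmed : ∀ x y z : V, ∃! m : V,
      m ∈ interval G x y ∧ m ∈ interval G y z ∧ m ∈ interval G x z)
    (p q : V) (f : V → ℤ × ℤ)
    (hf : ∀ u ∈ interval G p q, ∀ v ∈ interval G p q,
      (G.dist u v : ℤ) = |(f u).1 - (f v).1| + |(f u).2 - (f v).2|)
    {u v : V} (hu : u ∈ interval G p q) (hv : v ∈ interval G p q)
    (h1 : (f u).1 = (f v).1) :
    ∀ c : ℤ, min (f u).2 (f v).2 ≤ c → c ≤ max (f u).2 (f v).2 →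
      ∃ w ∈ interval G p q, f w = ((f u).1, c) := by
  intro c hcmin hcmax
  rcases le_total (f u).2 (f v).2 with hle | hle
  · have hc1 : (f u).2 ≤ c := by rw [min_eq_left hle] at hcmin; exact hcmin
    have hc2 : c ≤ (f v).2 := by rw [max_eq_right hle] at hcmax; exact hcmax
    exact coord_case hconn hmed p q f hf hu hv h1 hle hc1 hc2
  · have hc1 : (f v).2 ≤ c := by rw [min_eq_right hle] at hcmin; exact hcmin
    have hc2 : c ≤ (f u).2 := by rw [max_eq_left hle] at hcmax; exact hcmax
    obtain ⟨w, hw, hfw⟩ := coord_case hconn hmed p q f hf hv hu h1.symm hle hc1 hc2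
    exact ⟨w, hw, by rw [hfw, h1]⟩

end OrthoAux

/-- The image of an isometric embedding of `I(p,q)` into `(ℤ², ℓ₁)` is
orthogonally convex: if two image points share a coordinate, all lattice points of the
segment between them are in the image. -/
theorem embedding_image_orthogonally_convex {V : Type*} [Fintype V] (G : SimpleGraph V)
    (hG : IsMedianGraph G) (hcf : CubeFree G) (p q : V) (f : V → ℤ × ℤ)
    (hf : ∀ u ∈ interval G p q, ∀ v ∈ interval G p q,
      (G.dist u v : ℤ) = |(f u).1 - (f v).1| + |(f u).2 - (f v).2|) :
    ∀ u ∈ interval G p q, ∀ v ∈ interval G p q,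
      ((f u).1 = (f v).1 →
        ∀ c : ℤ, min (f u).2 (f v).2 ≤ c → c ≤ max (f u).2 (f v).2 →
          ∃ w ∈ interval G p q, f w = ((f u).1, c)) ∧
      ((f u).2 = (f v).2 →
        ∀ c : ℤ, min (f u).1 (f v).1 ≤ c → c ≤ max (f u).1 (f v).1 →
          ∃ w ∈ interval G p q, f w = (c, (f u).2)) := by
  obtain ⟨hconn, hmed⟩ := hG
  intro u hu v hv
  refine ⟨?_, ?_⟩
  · intro h1
    exact OrthoAux.part1 hconn hmed p q f hf hu hv h1
  · intro h2 c hcmin hcmax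
    set g : V → ℤ × ℤ := fun x => ((f x).2, (f x).1) with hgdef
    have hg : ∀ a ∈ interval G p q, ∀ b ∈ interval G p q,
        (G.dist a b : ℤ) = |(g a).1 - (g b).1| + |(g a).2 - (g b).2| := by
      intro a ha b hb
      rw [hf a ha b hb]
      simp only [hgdef]
      ring
    obtain ⟨w, hw, hfw⟩ := OrthoAux.part1 hconn hmed p q g hg hu hv h2 c hcmin hcmax
    refine ⟨w, hw, ?_⟩
    have h1' := congrArg Prod.fst hfw
    have h2' := congrArg Prod.snd hfw
    simp only [hgdef] at h1' h2'
    exact Prod.ext_iff.mpr ⟨h2', h1'⟩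
end
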